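/- For a positive integer n, x(n) = z(n) − (r(n)+1)·m(n) = 0 if and only if n ∈ {436, 451, 529, 545, 546}. -/

import Mathlib

/-!
Up to rounding, `z(n) = 2n/3` grows linearly while `(r(n)+1)·m(n) ≈ log₂ n · √(2n)`.
Once `n > 2¹⁰` we have `r ≥ 11`, hence `(3r+4)² ≤ 2^r < 2n` and so `m ≥ 3r+4`; then
`3(r+1)m + 3 < m² ≤ 2n`, which forces `x(n) > 0`. The remaining `n ≤ 1024` are checked by
computation, with `m(n)` left as an unknown pinned down by `m² ≤ 2n < (m+1)²`.
-/

theorem eq_clog_of_le_pow_of_minimal {b n r : ℕ} (hb : 1 < b)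
    (h : n ≤ b ^ r ∧ ∀ s : ℕ, n ≤ b ^ s → r ≤ s) : r = Nat.clog b n :=
  le_antisymm (h.2 _ (Nat.le_pow_clog hb n)) ((Nat.clog_le_iff_le_pow hb).2 h.1)

theorem mul_self_le_and_lt_of_maximal {N m : ℕ}
    (h : (m : ℤ) ^ 2 ≤ N ∧ ∀ w : ℕ, (w : ℤ) ^ 2 ≤ N → w ≤ m) :
    m * m ≤ N ∧ N < (m + 1) * (m + 1) := by
  refine ⟨by exact_mod_cast (sq (m : ℤ)) ▸ h.1, ?_⟩
  by_contra! hle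
  have := h.2 (m + 1) (by exact_mod_cast (sq (m + 1)) ▸ hle)
  omega

theorem sq_three_mul_add_four_le_two_pow {r : ℕ} (hr : 11 ≤ r) : (3 * r + 4) ^ 2 ≤ 2 ^ r := by
  induction r, hr using Nat.le_induction with
  | base => norm_num
  | succ r _ ih => rw [pow_succ 2 r]; nlinarith

theorem three_mul_clog_succ_mul_add_three_lt {n m : ℕ} (hn : 1024 < n)
    (hm₁ : m * m ≤ 2 * n) (hm₂ : 2 * n < (m + 1) * (m + 1)) :
    3 * ((Nat.clog 2 n + 1) * m) + 3 < 2 * n := by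
  set r := Nat.clog 2 n
  have hr : 11 ≤ r := by
    by_contra! hr
    have := (Nat.clog_le_iff_le_pow one_lt_two).1 (show r ≤ 10 by omega)
    omega
  have hpow : 2 ^ r < 2 * n := by
    have : 2 ^ r.pred < n := Nat.pow_pred_clog_lt_self one_lt_two (by omega)
    rw [← Nat.succ_pred_eq_of_pos (show 0 < r by omega), pow_succ]
    omega
  have hm : 3 * r + 4 ≤ m := by
    have := sq_three_mul_add_four_le_two_pow hr
    rw [← Nat.lt_succ_iff, ← Nat.mul_self_lt_mul_self_iff]
    nlinarith
  nlinarith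

set_option synthInstance.maxSize 2048 in
theorem div_three_eq_clog_succ_mul_iff_of_lt_1025 :
    ∀ n < 1025, 1 ≤ n → ∀ m < 46, m * m ≤ 2 * n → 2 * n < (m + 1) * (m + 1) →
      ((2 * n - 1) / 3 = (Nat.clog 2 n + 1) * m ↔
        n = 436 ∨ n = 451 ∨ n = 529 ∨ n = 545 ∨ n = 546) := by
  decide +kernel

theorem stmt_general
    (z : ℕ → ℤ) (m r : ℕ → ℕ) (x : ℕ → ℤ)
    (hz : ∀ n : ℕ, 1 ≤ n → 3 * z n < 2 * (n : ℤ) ∧ ∀ w : ℤ, 3 * w < 2 * (n : ℤ) → w ≤ z n)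
    (hm : ∀ n : ℕ, 1 ≤ n → (m n : ℤ) ^ 2 ≤ 2 * (n : ℤ) ∧ ∀ w : ℕ, (w : ℤ) ^ 2 ≤ 2 * (n : ℤ) → w ≤ m n)
    (hr : ∀ n : ℕ, 1 ≤ n → n ≤ 2 ^ r n ∧ ∀ s : ℕ, n ≤ 2 ^ s → r n ≤ s)
    (hx : ∀ n : ℕ, x n = z n - ((r n : ℤ) + 1) * (m n : ℤ)) :
    ∀ n : ℕ, 1 ≤ n →
      (x n = 0 ↔ n = 436 ∨ n = 451 ∨ n = 529 ∨ n = 545 ∨ n = 546) := by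
  intro n hn
  obtain ⟨hz₁, hz₂⟩ := hz n hn
  have hzn : z n = ((2 * n - 1) / 3 : ℕ) := by
    have := hz₂ (z n + 1)
    omega
  obtain ⟨hm_le, hm_lt⟩ := mul_self_le_and_lt_of_maximal (N := 2 * n) (by exact_mod_cast hm n hn)
  rw [hx n, hzn, eq_clog_of_le_pow_of_minimal one_lt_two (hr n hn), sub_eq_zero]
  norm_cast
  rcases le_or_gt n 1024 with hsmall | hlarge
  · exact div_three_eq_clog_succ_mul_iff_of_lt_1025 n (by omega) hn (m n) (by nlinarith) hm_le hm_lt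
  · have := three_mul_clog_succ_mul_add_three_lt hlarge hm_le hm_lt
    generalize (Nat.clog 2 n + 1) * m n = p at this ⊢
    omega

theorem stmt
    (z : ℕ → ℤ) (m r : ℕ → ℕ) (c x : ℕ → ℤ) (y : ℕ → ℚ)
    (hz : ∀ n : ℕ, 1 ≤ n → 3 * z n < 2 * (n : ℤ) ∧ ∀ w : ℤ, 3 * w < 2 * (n : ℤ) → w ≤ z n)
    (hm : ∀ n : ℕ, 1 ≤ n → (m n : ℤ) ^ 2 ≤ 2 * (n : ℤ) ∧ ∀ w : ℕ, (w : ℤ) ^ 2 ≤ 2 * (n : ℤ) → w ≤ m n)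
    (hr : ∀ n : ℕ, 1 ≤ n → n ≤ 2 ^ r n ∧ ∀ s : ℕ, n ≤ 2 ^ s → r n ≤ s)
    (hc : ∀ n : ℕ, c n = 2 * (n : ℤ) - 2 * z n + 2)
    (hx : ∀ n : ℕ, x n = z n - ((r n : ℤ) + 1) * (m n : ℤ))
    (hy : ∀ n : ℕ, y n = (2 : ℚ) ^ (c n - (m n : ℤ)) - (n : ℚ) ^ ((m n : ℤ) - 1)) :
    ∀ n : ℕ, 1 ≤ n →
      (x n = 0 ↔ n = 436 ∨ n = 451 ∨ n = 529 ∨ n = 545 ∨ n = 546) :=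
  stmt_general z m r x hz hm hr hx
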